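/- For every real α with 1 < α ≤ 2, every integer M ≥ 2 and every vector U ∈ ℂ^{M−1}, the quantity U* A⁻¹ U (where U* is the conjugate transpose) is a real number and satisfies ‖U‖² ≤ U* A⁻¹ U ≤ ‖U‖² / M₁(α). -/

import Mathlib

open Matrix

/-- `ϱ₂ = (3α³−19α²+36α−16)/(24α)`. -/
noncomputable def rho2 (α : ℝ) : ℝ := (3 * α ^ 3 - 19 * α ^ 2 + 36 * α - 16) / (24 * α)

/-- `M₁(α) = (−3α³+19α²−30α+16)/(6α)`. -/
noncomputable def M1 (α : ℝ) : ℝ := (-3 * α ^ 3 + 19 * α ^ 2 - 30 * α + 16) / (6 * α)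

/-- The `(M−1)×(M−1)` tridiagonal matrix with diagonal `1−2ϱ₂` and off-diagonal `ϱ₂`. -/
noncomputable def matA (α : ℝ) (M : ℕ) : Matrix (Fin (M - 1)) (Fin (M - 1)) ℝ :=
  fun i j =>
    if (i : ℕ) = (j : ℕ) then 1 - 2 * rho2 α
    else if (i : ℕ) + 1 = (j : ℕ) ∨ (j : ℕ) + 1 = (i : ℕ) then rho2 α
    else 0

namespace AuxMatA

/-- difference matrix: `D i j = δ_{i,j} - δ_{i,j+1}` -/
noncomputable def matD (n : ℕ) : Matrix (Fin (n + 1)) (Fin n) ℂ :=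
  fun i j => (if (i : ℕ) = (j : ℕ) then 1 else 0) - (if (i : ℕ) = (j : ℕ) + 1 then 1 else 0)

lemma sum_delta {m : ℕ} (a : ℕ) (ha : a < m) (f : Fin m → ℂ) :
    (∑ i : Fin m, if (i : ℕ) = a then f i else 0) = f ⟨a, ha⟩ := by
  rw [Finset.sum_eq_single (⟨a, ha⟩ : Fin m)]
  · simp
  · intro b _ hb
    rw [if_neg]
    simp only [ne_eq, Fin.ext_iff] at hb
    simpa using hb
  · simp

lemma key_sum {m : ℕ} (x y : ℕ) (hx : x < m) :
    (∑ i : Fin m, (if (i : ℕ) = x then (1 : ℂ) else 0) * (if (i : ℕ) = y then 1 else 0))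
      = if x = y then 1 else 0 := by
  calc (∑ i : Fin m, (if (i : ℕ) = x then (1 : ℂ) else 0) * (if (i : ℕ) = y then 1 else 0))
      = ∑ i : Fin m, (if (i : ℕ) = x then (if (i : ℕ) = y then (1:ℂ) else 0) else 0) := by
        refine Finset.sum_congr rfl fun i _ => ?_
        split_ifs <;> simp
    _ = if x = y then 1 else 0 := by rw [sum_delta x hx]

lemma sum_delta_mul {m : ℕ} (x : ℕ) (hx : x < m) (w : Fin m → ℂ) :
    (∑ i : Fin m, (if (i : ℕ) = x then (1 : ℂ) else 0) * w i) = w ⟨x, hx⟩ := by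
  calc (∑ i : Fin m, (if (i : ℕ) = x then (1 : ℂ) else 0) * w i)
      = ∑ i : Fin m, (if (i : ℕ) = x then w i else 0) := by
        refine Finset.sum_congr rfl fun i _ => ?_
        split_ifs <;> simp
    _ = w ⟨x, hx⟩ := sum_delta x hx w

lemma star_dot_self {m : ℕ} (v : Fin m → ℂ) :
    star v ⬝ᵥ v = ((∑ i, Complex.normSq (v i) : ℝ) : ℂ) := by
  simp only [dotProduct, Pi.star_apply, Complex.ofReal_sum]
  refine Finset.sum_congr rfl fun i _ => ?_
  rw [mul_comm, Complex.star_def, Complex.mul_conj]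

lemma star_dot_adjoint {k m : ℕ} (N : Matrix (Fin k) (Fin m) ℂ) (y : Fin m → ℂ)
    (w : Fin k → ℂ) : star y ⬝ᵥ (Nᴴ *ᵥ w) = star (N *ᵥ y) ⬝ᵥ w := by
  rw [star_mulVec, dotProduct_mulVec]

lemma matDTD_apply {n : ℕ} (j k : Fin n) :
    ((matD n)ᴴ * matD n) j k
      = (if (j : ℕ) = (k : ℕ) then (2 : ℂ) else 0)
        - (if (j : ℕ) = (k : ℕ) + 1 then 1 else 0)
        - (if (j : ℕ) + 1 = (k : ℕ) then 1 else 0) := by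
  have hj : (j : ℕ) < n + 1 := by omega
  have hj1 : (j : ℕ) + 1 < n + 1 := by omega
  simp only [Matrix.mul_apply, conjTranspose_apply, matD, star_sub, apply_ite (star : ℂ → ℂ),
    star_one, star_zero, sub_mul, mul_sub]
  rw [Finset.sum_sub_distrib, Finset.sum_sub_distrib, Finset.sum_sub_distrib,
    key_sum _ _ hj, key_sum _ _ hj, key_sum _ _ hj1, key_sum _ _ hj1]
  split_ifs <;> first | ring1 | (exfalso; omega)

lemma matA_map_eq (α : ℝ) (M : ℕ) :
    (matA α M).map Complex.ofReal
      = 1 - (rho2 α : ℂ) • ((matD (M - 1))ᴴ * matD (M - 1)) := by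
  ext j k
  rw [Matrix.map_apply, Matrix.sub_apply, Matrix.smul_apply, matDTD_apply, Matrix.one_apply]
  simp only [matA, smul_eq_mul, Fin.ext_iff]
  split_ifs <;> push_cast <;> first | ring1 | (exfalso; omega)

lemma matD_conjT_mulVec_apply {n : ℕ} (w : Fin (n + 1) → ℂ) (j : Fin n) :
    ((matD n)ᴴ *ᵥ w) j = w j.castSucc - w j.succ := by
  have hj : (j : ℕ) < n + 1 := by omega
  have hj1 : (j : ℕ) + 1 < n + 1 := by omega
  simp only [mulVec, dotProduct, conjTranspose_apply, matD, star_sub,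
    apply_ite (star : ℂ → ℂ), star_one, star_zero, sub_mul]
  rw [Finset.sum_sub_distrib, sum_delta_mul _ hj, sum_delta_mul _ hj1]
  congr 1

end AuxMatA

namespace AuxMatA
open AuxMatA

lemma normSq_sub_le (a b : ℂ) :
    Complex.normSq (a - b) ≤ 2 * Complex.normSq a + 2 * Complex.normSq b := by
  simp only [Complex.normSq_apply, Complex.sub_re, Complex.sub_im]
  nlinarith [sq_nonneg (a.re + b.re), sq_nonneg (a.im + b.im)]

/-- `‖Dᴴ w‖² ≤ 4 ‖w‖²` -/
lemma normSq_matD_conjT_mulVec_le {n : ℕ} (w : Fin (n + 1) → ℂ) :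
    ∑ j : Fin n, Complex.normSq (((matD n)ᴴ *ᵥ w) j)
      ≤ 4 * ∑ i, Complex.normSq (w i) := by
  have h1 : ∑ j : Fin n, Complex.normSq (((matD n)ᴴ *ᵥ w) j)
      ≤ ∑ j : Fin n, (2 * Complex.normSq (w j.castSucc) + 2 * Complex.normSq (w j.succ)) := by
    refine Finset.sum_le_sum fun j _ => ?_
    rw [matD_conjT_mulVec_apply]
    exact normSq_sub_le _ _
  have h2 : ∑ j : Fin n, Complex.normSq (w j.castSucc) ≤ ∑ i, Complex.normSq (w i) := by
    rw [Fin.sum_univ_castSucc (f := fun i => Complex.normSq (w i))]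
    have := Complex.normSq_nonneg (w (Fin.last n))
    linarith
  have h3 : ∑ j : Fin n, Complex.normSq (w j.succ) ≤ ∑ i, Complex.normSq (w i) := by
    rw [Fin.sum_univ_succ (f := fun i => Complex.normSq (w i))]
    have := Complex.normSq_nonneg (w 0)
    linarith
  rw [Finset.sum_add_distrib, ← Finset.mul_sum, ← Finset.mul_sum] at h1
  linarith

/-- Cauchy–Schwarz -/
lemma re_dot_sq_le {m : ℕ} (u v : Fin m → ℂ) :
    (star u ⬝ᵥ v).re ^ 2 ≤ (∑ i, Complex.normSq (u i)) * ∑ i, Complex.normSq (v i) := by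
  have habs : |(star u ⬝ᵥ v).re| ≤ ∑ i, ‖u i‖ * ‖v i‖ := by
    rw [dotProduct, Complex.re_sum]
    refine (Finset.abs_sum_le_sum_abs _ _).trans (Finset.sum_le_sum fun i _ => ?_)
    calc |(star (u i) * v i).re| ≤ ‖star (u i) * v i‖ := Complex.abs_re_le_norm _
      _ = ‖u i‖ * ‖v i‖ := by
          rw [norm_mul]
          simp
  have hcs := Finset.sum_mul_sq_le_sq_mul_sq Finset.univ
    (fun i => ‖u i‖) (fun i => ‖v i‖)
  have h1 : (star u ⬝ᵥ v).re ^ 2 ≤ (∑ i, ‖u i‖ * ‖v i‖) ^ 2 := by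
    rw [← sq_abs]
    have h0 : (0:ℝ) ≤ ∑ i, ‖u i‖ * ‖v i‖ :=
      Finset.sum_nonneg fun i _ => mul_nonneg (norm_nonneg _) (norm_nonneg _)
    exact pow_le_pow_left₀ (abs_nonneg _) habs 2
  calc (star u ⬝ᵥ v).re ^ 2 ≤ (∑ i, ‖u i‖ * ‖v i‖) ^ 2 := h1
    _ ≤ (∑ i, ‖u i‖ ^ 2) * ∑ i, ‖v i‖ ^ 2 := hcs
    _ = (∑ i, Complex.normSq (u i)) * ∑ i, Complex.normSq (v i) := by
        simp [Complex.sq_norm]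

end AuxMatA

namespace AuxMatA

lemma quad_eq (α : ℝ) (M : ℕ) (y : Fin (M - 1) → ℂ) :
    star y ⬝ᵥ ((matA α M).map Complex.ofReal *ᵥ y)
      = (((∑ i, Complex.normSq (y i))
          - rho2 α * ∑ i, Complex.normSq ((matD (M - 1) *ᵥ y) i) : ℝ) : ℂ) := by
  rw [matA_map_eq, sub_mulVec, one_mulVec, smul_mulVec, ← mulVec_mulVec,
    dotProduct_sub, dotProduct_smul, star_dot_adjoint, star_dot_self, star_dot_self]
  push_cast
  simp only [smul_eq_mul]

lemma dot_v_y (M : ℕ) (y : Fin (M - 1) → ℂ) :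
    star ((matD (M - 1))ᴴ *ᵥ (matD (M - 1) *ᵥ y)) ⬝ᵥ y
      = ((∑ i, Complex.normSq ((matD (M - 1) *ᵥ y) i) : ℝ) : ℂ) := by
  rw [star_mulVec, conjTranspose_conjTranspose, ← dotProduct_mulVec, star_dot_self]

lemma quad2 (α : ℝ) (M : ℕ) (y : Fin (M - 1) → ℂ) :
    (∑ i, Complex.normSq ((((matA α M).map Complex.ofReal) *ᵥ y) i))
      = (∑ i, Complex.normSq (y i))
        - 2 * rho2 α * (∑ i, Complex.normSq ((matD (M - 1) *ᵥ y) i))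
        + rho2 α ^ 2
            * ∑ j, Complex.normSq (((matD (M - 1))ᴴ *ᵥ (matD (M - 1) *ᵥ y)) j) := by
  have hU : ((matA α M).map Complex.ofReal) *ᵥ y
      = y - (rho2 α : ℂ) • ((matD (M - 1))ᴴ *ᵥ (matD (M - 1) *ᵥ y)) := by
    rw [matA_map_eq, sub_mulVec, one_mulVec, smul_mulVec, ← mulVec_mulVec]
  have hyv : star y ⬝ᵥ ((matD (M - 1))ᴴ *ᵥ (matD (M - 1) *ᵥ y))
      = ((∑ i, Complex.normSq ((matD (M - 1) *ᵥ y) i) : ℝ) : ℂ) := by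
    rw [star_dot_adjoint, star_dot_self]
  apply Complex.ofReal_injective
  rw [← star_dot_self]
  rw [hU]
  have hvv := star_dot_self ((matD (M - 1))ᴴ *ᵥ (matD (M - 1) *ᵥ y))
  have hyy := star_dot_self y
  rw [star_sub, star_smul, sub_dotProduct, dotProduct_sub, dotProduct_sub,
    smul_dotProduct, smul_dotProduct, dotProduct_smul, dotProduct_smul, hyv, dot_v_y, hyy, hvv]
  simp only [Complex.star_def, Complex.conj_ofReal, smul_eq_mul]
  push_cast
  ring

lemma tau_sq_le (M : ℕ) (y : Fin (M - 1) → ℂ) :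
    (∑ i, Complex.normSq ((matD (M - 1) *ᵥ y) i)) ^ 2
      ≤ (∑ j, Complex.normSq (((matD (M - 1))ᴴ *ᵥ (matD (M - 1) *ᵥ y)) j))
          * ∑ i, Complex.normSq (y i) := by
  have h := re_dot_sq_le ((matD (M - 1))ᴴ *ᵥ (matD (M - 1) *ᵥ y)) y
  rwa [dot_v_y, Complex.ofReal_re] at h

lemma tau_le_four_s (M : ℕ) (y : Fin (M - 1) → ℂ) :
    (∑ i, Complex.normSq ((matD (M - 1) *ᵥ y) i)) ≤ 4 * ∑ i, Complex.normSq (y i) := by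
  set τ := ∑ i, Complex.normSq ((matD (M - 1) *ᵥ y) i) with hτ
  set s := ∑ i, Complex.normSq (y i) with hs
  have hτ0 : 0 ≤ τ := Finset.sum_nonneg fun i _ => Complex.normSq_nonneg _
  have hs0 : 0 ≤ s := Finset.sum_nonneg fun i _ => Complex.normSq_nonneg _
  have hβ := normSq_matD_conjT_mulVec_le (matD (M - 1) *ᵥ y)
  have hcs := tau_sq_le M y
  rcases eq_or_lt_of_le hτ0 with h | h
  · linarith
  · nlinarith

lemma rho2_nonneg {α : ℝ} (h1 : 1 < α) (h2 : α ≤ 2) : 0 ≤ rho2 α := by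
  unfold rho2
  apply div_nonneg _ (by linarith)
  nlinarith [mul_nonneg (mul_nonneg (by linarith : (0:ℝ) ≤ α - 1) (by linarith : (0:ℝ) ≤ 2 - α))
    (by linarith : (0:ℝ) ≤ 10 - 3 * α)]

lemma M1_pos {α : ℝ} (h1 : 1 < α) (h2 : α ≤ 2) : 0 < M1 α := by
  unfold M1
  apply div_pos _ (by linarith)
  nlinarith [mul_nonneg (mul_nonneg (by linarith : (0:ℝ) ≤ α - 1) (by linarith : (0:ℝ) ≤ α - 1))
    (by linarith : (0:ℝ) ≤ 2 - α), sq_nonneg (α - 1)]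

lemma M1_eq {α : ℝ} (h1 : 1 < α) : M1 α = 1 - 4 * rho2 α := by
  have : α ≠ 0 := by linarith
  unfold M1 rho2
  field_simp
  ring

end AuxMatA

namespace AuxMatA

open ComplexOrder

lemma matA_posdef (α : ℝ) (h1 : 1 < α) (h2 : α ≤ 2) (M : ℕ) :
    ((matA α M).map Complex.ofReal).PosDef := by
  rw [posDef_iff_dotProduct_mulVec]
  constructor
  · show _ᴴ = _
    rw [matA_map_eq]
    rw [conjTranspose_sub, conjTranspose_smul, conjTranspose_one, conjTranspose_mul,
      conjTranspose_conjTranspose]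
    simp [Complex.star_def, Complex.conj_ofReal]
  · intro x hx
    rw [quad_eq α M x]
    rw [Complex.zero_lt_real]
    have hτ4 := tau_le_four_s M x
    have hρ := rho2_nonneg h1 h2
    have hM1 := M1_pos h1 h2
    rw [M1_eq h1] at hM1
    have hs0 : 0 < ∑ i, Complex.normSq (x i) := by
      obtain ⟨i, hi⟩ := Function.ne_iff.mp hx
      exact Finset.sum_pos' (fun j _ => Complex.normSq_nonneg _)
        ⟨i, Finset.mem_univ i, Complex.normSq_pos.mpr hi⟩
    nlinarith [mul_nonneg hρ (by linarith :
        (0:ℝ) ≤ 4 * ∑ i, Complex.normSq (x i) - ∑ i, Complex.normSq ((matD (M - 1) *ᵥ x) i)),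
      mul_pos hs0 hM1]

lemma matA_det_isUnit (α : ℝ) (h1 : 1 < α) (h2 : α ≤ 2) (M : ℕ) :
    IsUnit (matA α M).det := by
  have hpd := matA_posdef α h1 h2 M
  have h := hpd.det_pos
  have hdet : ((matA α M).map Complex.ofReal).det = ((matA α M).det : ℂ) :=
    (RingHom.map_det (Complex.ofRealHom) (matA α M)).symm
  rw [hdet] at h
  have hne : (matA α M).det ≠ 0 := by
    intro h0
    rw [h0] at h
    simp at h
  exact hne.isUnit

end AuxMatA

open AuxMatA in
/-- For `1 < α ≤ 2`, `M ≥ 2` and any complex vector `U`, the quantity `U* A⁻¹ U` is real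
and satisfies `‖U‖² ≤ U* A⁻¹ U ≤ ‖U‖²/M₁(α)`. -/
theorem matA_inv_quadratic_bounds (α : ℝ) (h1 : 1 < α) (h2 : α ≤ 2) (M : ℕ) (hM : 2 ≤ M)
    (U : Fin (M - 1) → ℂ) :
    (dotProduct (star U) (((matA α M)⁻¹.map (Complex.ofReal)).mulVec U)).im = 0 ∧
    (∑ j, ‖U j‖ ^ 2) ≤
      (dotProduct (star U) (((matA α M)⁻¹.map (Complex.ofReal)).mulVec U)).re ∧
    (dotProduct (star U) (((matA α M)⁻¹.map (Complex.ofReal)).mulVec U)).re ≤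
      (∑ j, ‖U j‖ ^ 2) / M1 α := by
  have hdet := matA_det_isUnit α h1 h2 M
  have hpd := matA_posdef α h1 h2 M
  set y := ((matA α M)⁻¹.map Complex.ofReal) *ᵥ U with hy
  have hmul : (matA α M).map Complex.ofReal * (matA α M)⁻¹.map Complex.ofReal = 1 := by
    have h1' : matA α M * (matA α M)⁻¹ = 1 := Matrix.mul_nonsing_inv _ hdet
    have hmm : ((matA α M) * (matA α M)⁻¹).map (Complex.ofRealHom : ℝ →+* ℂ)
        = (matA α M).map (Complex.ofRealHom : ℝ →+* ℂ)
          * (matA α M)⁻¹.map (Complex.ofRealHom : ℝ →+* ℂ) := Matrix.map_mul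
    rw [h1'] at hmm
    have h1m : (1 : Matrix (Fin (M - 1)) (Fin (M - 1)) ℝ).map (Complex.ofRealHom : ℝ →+* ℂ)
        = 1 := Matrix.map_one _ (map_zero _) (map_one _)
    rw [h1m] at hmm
    exact hmm.symm
  have hU : (matA α M).map Complex.ofReal *ᵥ y = U := by
    rw [hy, mulVec_mulVec, hmul, one_mulVec]
  have hSval : star U ⬝ᵥ y
      = (((∑ i, Complex.normSq (y i))
          - rho2 α * ∑ i, Complex.normSq ((matD (M - 1) *ᵥ y) i) : ℝ) : ℂ) := by
    conv_lhs => rw [← hU]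
    rw [star_mulVec, ← dotProduct_mulVec, hpd.1, quad_eq]
  have habs : (∑ j, ‖U j‖ ^ 2)
      = (∑ i, Complex.normSq (y i))
        - 2 * rho2 α * (∑ i, Complex.normSq ((matD (M - 1) *ᵥ y) i))
        + rho2 α ^ 2
            * ∑ j, Complex.normSq (((matD (M - 1))ᴴ *ᵥ (matD (M - 1) *ᵥ y)) j) := by
    have h0 : (∑ j, ‖U j‖ ^ 2) = ∑ j, Complex.normSq (U j) := by
      simp [Complex.sq_norm]
    rw [h0]
    conv_lhs => rw [← hU]
    exact quad2 α M y
  have hβ4 := normSq_matD_conjT_mulVec_le (matD (M - 1) *ᵥ y)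
  have hcs := tau_sq_le M y
  have hτ4 := tau_le_four_s M y
  have hρ := rho2_nonneg h1 h2
  have hM1 := M1_pos h1 h2
  have hM1e := M1_eq h1
  have hs0 : 0 ≤ ∑ i, Complex.normSq (y i) :=
    Finset.sum_nonneg fun i _ => Complex.normSq_nonneg _
  have hτ0 : 0 ≤ ∑ i, Complex.normSq ((matD (M - 1) *ᵥ y) i) :=
    Finset.sum_nonneg fun i _ => Complex.normSq_nonneg _
  have hβ0 : 0 ≤ ∑ j, Complex.normSq (((matD (M - 1))ᴴ *ᵥ (matD (M - 1) *ᵥ y)) j) :=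
    Finset.sum_nonneg fun j _ => Complex.normSq_nonneg _
  rw [hM1e] at hM1
  refine ⟨?_, ?_, ?_⟩
  · rw [hSval, Complex.ofReal_im]
  · rw [habs, hSval, Complex.ofReal_re]
    nlinarith [mul_nonneg (mul_nonneg hρ hρ)
        (by linarith : (0:ℝ) ≤ 4 * (∑ i, Complex.normSq ((matD (M - 1) *ᵥ y) i))
          - ∑ j, Complex.normSq (((matD (M - 1))ᴴ *ᵥ (matD (M - 1) *ᵥ y)) j)),
      mul_nonneg (mul_nonneg hρ hτ0) (by linarith : (0:ℝ) ≤ 1 - 4 * rho2 α)]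
  · rw [habs, hSval, Complex.ofReal_re, le_div_iff₀ (by rw [hM1e]; exact hM1), hM1e]
    rcases eq_or_lt_of_le hs0 with hs | hs
    · have hτz : (∑ i, Complex.normSq ((matD (M - 1) *ᵥ y) i)) ≤ 0 := by
        nlinarith [hcs]
      have hτe : (∑ i, Complex.normSq ((matD (M - 1) *ᵥ y) i)) = 0 := le_antisymm hτz hτ0
      rw [hτe, ← hs]
      nlinarith [mul_nonneg (mul_nonneg hρ hρ) hβ0]
    · have hρτ : rho2 α * (∑ i, Complex.normSq ((matD (M - 1) *ᵥ y) i))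
          ≤ ∑ i, Complex.normSq (y i) := by
        nlinarith [mul_nonneg hρ (by linarith : (0:ℝ) ≤ 4 * (∑ i, Complex.normSq (y i))
            - ∑ i, Complex.normSq ((matD (M - 1) *ᵥ y) i)),
          mul_nonneg (le_of_lt hs) (by linarith : (0:ℝ) ≤ 1 - 4 * rho2 α)]
      nlinarith [mul_nonneg (mul_nonneg hρ
          (by linarith : (0:ℝ) ≤ 4 * (∑ i, Complex.normSq (y i))
            - ∑ i, Complex.normSq ((matD (M - 1) *ᵥ y) i)))
          (by linarith : (0:ℝ) ≤ (∑ i, Complex.normSq (y i))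
            - rho2 α * ∑ i, Complex.normSq ((matD (M - 1) *ᵥ y) i)),
        mul_nonneg (mul_nonneg hρ hρ)
          (by nlinarith :
            (0:ℝ) ≤ (∑ j, Complex.normSq (((matD (M - 1))ᴴ *ᵥ (matD (M - 1) *ᵥ y)) j))
                * (∑ i, Complex.normSq (y i))
              - (∑ i, Complex.normSq ((matD (M - 1) *ᵥ y) i)) ^ 2),
        hs, mul_pos hs hs]
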